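/- Let N ≥ 3 and let u₀, u₁ : ℝ^N → ℂ be integrable with ∫_{ℝ^N} |ŵ₀(ξ)|² dξ < ∞, ∫_{ℝ^N} |ŵ₁(ξ)|² dξ < ∞ and E(0) := ∫_{ℝ^N} ( |ŵ₁(ξ)|² + (1/4)(log²(1+|ξ|²) + π²)|ŵ₀(ξ)|² ) dξ < ∞. Let û(ξ,t) be the explicit Fourier-space solution with data ŵ₀(ξ), ŵ₁(ξ) and let ∂_t û(ξ,t) denote its time derivative. Then there exist C > 0 depending only on N and T > 0 such that for all t ≥ T: ∫_{ℝ^N} ( |∂_t û(ξ,t)|² + (1/4) log²(1+|ξ|²)|û(ξ,t)|² + (π²/4)|û(ξ,t)|² ) dξ ≤ C ( ‖u₁‖_{L¹}² t^{-N/2} + ‖u₀‖_{L¹}² t^{-(N+4)/2} + π² ‖u₀‖_{L¹}² t^{-N/2} ) + C ( 2^{-2t/3} ∫_{ℝ^N}|ŵ₁(ξ)|² dξ + 2^{-2t/3} ∫_{ℝ^N}|ŵ₀(ξ)|² dξ ) + C e^{-8t/9} E(0). -/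

import Mathlib

/-!
Write `L = log (1 + ‖ξ‖²)`. Each frequency evolves as a damped oscillator: `û` and `∂ₜû` are
`e^{-tL/2}` times trigonometric combinations of `ŵ₀, ŵ₁` with coefficients `O(1 + L)` and
`O((1 + L)²)`, so the energy density at `ξ` is at most `26 e^{-tL} (1 + L)⁴ (|ŵ₀|² + |ŵ₁|²)`.
At low frequencies `‖ξ‖ ≤ 1` one has `‖ξ‖²/2 ≤ L ≤ 1` and `|ŵⱼ| ≤ ‖uⱼ‖_{L¹}`, so the density is
dominated by a Gaussian `e^{-t‖ξ‖²/2}`, whose integral is `(2π/t)^{N/2}`. At high frequencies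
`L ≥ log 2`, and `e^{-tL} (1 + L)⁴ ≤ e^{-(t-4) log 2} ≤ 2^{-2t/3}` once `t ≥ 12`.
-/

open MeasureTheory

/-- Non-normalized Fourier transform `ŵ(ξ) = ∫ u(x) e^{-i⟨x,ξ⟩} dx`. -/
noncomputable def ft {N : ℕ} (u : EuclideanSpace ℝ (Fin N) → ℂ)
    (ξ : EuclideanSpace ℝ (Fin N)) : ℂ :=
  ∫ x, u x * Complex.exp (-Complex.I * ((inner ℝ x ξ : ℝ) : ℂ))

/-- The explicit Fourier-space solution with data `w₀ ξ`, `w₁ ξ`. -/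
noncomputable def uhat {N : ℕ} (w₀ w₁ : EuclideanSpace ℝ (Fin N) → ℂ)
    (ξ : EuclideanSpace ℝ (Fin N)) (t : ℝ) : ℂ :=
  (Real.exp (-(t * Real.log (1 + ‖ξ‖ ^ 2)) / 2) : ℂ)
    * ((Real.cos (Real.pi * t / 4)
        + (2 * Real.log (1 + ‖ξ‖ ^ 2) / Real.pi) * Real.sin (Real.pi * t / 4) : ℝ) : ℂ)
    * w₀ ξ
  + (Real.exp (-(t * Real.log (1 + ‖ξ‖ ^ 2)) / 2) : ℂ) * ((4 / Real.pi : ℝ) : ℂ)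
    * (Real.sin (Real.pi * t / 4) : ℂ) * w₁ ξ

open Real

lemma abs_mul_sin_le {c : ℝ} (hc : 0 ≤ c) (x : ℝ) : |c * sin x| ≤ c := by
  rw [abs_mul, abs_of_nonneg hc]
  exact mul_le_of_le_one_right hc (abs_sin_le_one x)

lemma half_le_log_one_add {x : ℝ} (hx0 : 0 ≤ x) (hx1 : x ≤ 1) : x / 2 ≤ log (1 + x) := by
  have h := one_sub_inv_le_log_of_pos (by linarith : 0 < 1 + x)
  have : x / 2 ≤ 1 - (1 + x)⁻¹ := by
    rw [inv_eq_one_div, le_sub_iff_add_le, ← le_sub_iff_add_le', div_le_iff₀ (by linarith)]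
    nlinarith
  linarith

lemma exp_neg_mul_mul_one_add_pow_four_le_gaussian {t x L : ℝ} (ht : 0 ≤ t) (hL0 : 0 ≤ L)
    (hxL : x / 2 ≤ L) (hL1 : L ≤ 1) : exp (-(t * L)) * (1 + L) ^ 4 ≤ 16 * exp (-(t / 2) * x) := by
  have hexp : exp (-(t * L)) ≤ exp (-(t / 2) * x) := by
    gcongr
    nlinarith
  have hpow : (1 + L) ^ 4 ≤ 16 := by
    calc (1 + L) ^ 4 ≤ 2 ^ 4 := by gcongr; linarith
      _ = 16 := by norm_num
  exact (mul_le_mul hexp hpow (by positivity) (exp_pos _).le).trans_eq (mul_comm _ _)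

lemma exp_neg_mul_mul_one_add_pow_four_le_two_rpow {t L : ℝ} (ht : 12 ≤ t) (hL : log 2 ≤ L) :
    exp (-(t * L)) * (1 + L) ^ 4 ≤ (2 : ℝ) ^ (-(2 * t) / 3) := by
  have hlog2 : 0 < log 2 := log_pos one_lt_two
  have hpow : (1 + L) ^ 4 ≤ exp (4 * L) := by
    rw [show 4 * L = (4 : ℕ) * L by norm_num, exp_nat_mul]
    gcongr
    · linarith
    · linarith [add_one_le_exp L]
  calc exp (-(t * L)) * (1 + L) ^ 4 ≤ exp (-(t * L)) * exp (4 * L) := by gcongr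
    _ = exp (-((t - 4) * L)) := by rw [← exp_add]; ring_nf
    _ ≤ exp (-(2 * t) / 3 * log 2) := by
      gcongr
      nlinarith
    _ = (2 : ℝ) ^ (-(2 * t) / 3) := by rw [rpow_def_of_pos two_pos, mul_comm]

lemma norm_ofReal_mul_add_ofReal_mul_sq_le {a b A : ℝ} (ha : |a| ≤ A) (hb : |b| ≤ A) (z w : ℂ) :
    ‖(a : ℂ) * z + b * w‖ ^ 2 ≤ 2 * A ^ 2 * (‖z‖ ^ 2 + ‖w‖ ^ 2) := by
  have hle : ‖(a : ℂ) * z + b * w‖ ≤ A * (‖z‖ + ‖w‖) := by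
    refine (norm_add_le _ _).trans ?_
    rw [norm_mul, norm_mul, Complex.norm_real, Complex.norm_real, Real.norm_eq_abs,
      Real.norm_eq_abs, mul_add]
    gcongr
  calc ‖(a : ℂ) * z + b * w‖ ^ 2 ≤ (A * (‖z‖ + ‖w‖)) ^ 2 := by gcongr
    _ ≤ 2 * A ^ 2 * (‖z‖ ^ 2 + ‖w‖ ^ 2) := by nlinarith [sq_nonneg (A * (‖z‖ - ‖w‖))]

lemma integrable_exp_neg_mul_sq_norm {V : Type*} [NormedAddCommGroup V] [InnerProductSpace ℝ V]
    [FiniteDimensional ℝ V] [MeasurableSpace V] [BorelSpace V] {b : ℝ} (hb : 0 < b) :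
    Integrable fun v : V => exp (-b * ‖v‖ ^ 2) :=
  Integrable.of_integral_ne_zero <| by
    rw [GaussianFourier.integral_rexp_neg_mul_sq_norm hb]
    positivity

lemma integral_exp_neg_half_mul_sq_norm {N : ℕ} {t : ℝ} (ht : 0 < t) :
    ∫ ξ : EuclideanSpace ℝ (Fin N), exp (-(t / 2) * ‖ξ‖ ^ 2)
      = (2 * π) ^ ((N : ℝ) / 2) * t ^ (-(N : ℝ) / 2) := by
  have h : π / (t / 2) = 2 * π * t⁻¹ := by field_simp
  rw [GaussianFourier.integral_rexp_neg_mul_sq_norm (half_pos ht), finrank_euclideanSpace_fin, h,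
    mul_rpow (by positivity) (by positivity), inv_rpow ht.le, ← rpow_neg ht.le, neg_div]

lemma norm_ft_le {N : ℕ} (u : EuclideanSpace ℝ (Fin N) → ℂ) (ξ : EuclideanSpace ℝ (Fin N)) :
    ‖ft u ξ‖ ≤ ∫ x, ‖u x‖ := by
  refine (norm_integral_le_integral_norm _).trans_eq (integral_congr_ae (ae_of_all _ fun x => ?_))
  simp [Complex.norm_exp]

namespace DampedWave

section Coefficients

-- `L` stands for `log (1 + ‖ξ‖²)`, see `uhat_eq_coeff` and `hasDerivAt_uhat`.

variable (L t : ℝ)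

noncomputable def coeff₀ : ℝ :=
  exp (-(t * L) / 2) * (cos (π * t / 4) + 2 * L / π * sin (π * t / 4))

noncomputable def coeff₁ : ℝ := exp (-(t * L) / 2) * (4 / π * sin (π * t / 4))

noncomputable def coeff₀' : ℝ := exp (-(t * L) / 2) * (-(L ^ 2 / π + π / 4) * sin (π * t / 4))

noncomputable def coeff₁' : ℝ :=
  exp (-(t * L) / 2) * (cos (π * t / 4) - 2 * L / π * sin (π * t / 4))

lemma hasDerivAt_exp_mul_cos_add_sin (a b : ℝ) :
    HasDerivAt (fun s => exp (-(s * L) / 2) * (a * cos (π * s / 4) + b * sin (π * s / 4)))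
      (exp (-(t * L) / 2) * ((b * π / 4 - a * L / 2) * cos (π * t / 4)
        - (a * π / 4 + b * L / 2) * sin (π * t / 4))) t := by
  have he : HasDerivAt (fun s => exp (-(s * L) / 2)) (exp (-(t * L) / 2) * (-(1 * L) / 2)) t :=
    (((hasDerivAt_id t).mul_const L).neg.div_const 2).exp
  have hc : HasDerivAt (fun s => cos (π * s / 4)) (-sin (π * t / 4) * (π * 1 / 4)) t :=
    (((hasDerivAt_id t).const_mul π).div_const 4).cos
  have hs : HasDerivAt (fun s => sin (π * s / 4)) (cos (π * t / 4) * (π * 1 / 4)) t :=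
    (((hasDerivAt_id t).const_mul π).div_const 4).sin
  refine (he.mul ((hc.const_mul a).add (hs.const_mul b))).congr_deriv ?_
  simp only [Pi.add_apply]
  ring

lemma hasDerivAt_coeff₀ : HasDerivAt (coeff₀ L) (coeff₀' L t) t := by
  convert hasDerivAt_exp_mul_cos_add_sin L t 1 (2 * L / π) using 1
  · ext s; simp [coeff₀]
  · have := pi_pos.ne'
    simp only [coeff₀']
    field_simp
    ring

lemma hasDerivAt_coeff₁ : HasDerivAt (coeff₁ L) (coeff₁' L t) t := by
  convert hasDerivAt_exp_mul_cos_add_sin L t 0 (4 / π) using 1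
  · ext s; simp [coeff₁]
  · have := pi_pos.ne'
    simp only [coeff₁']
    field_simp
    ring

variable {L}

lemma two_mul_div_pi_le (hL : 0 ≤ L) : 2 * L / π ≤ L := by
  rw [div_le_iff₀ pi_pos]
  nlinarith [pi_gt_three]

lemma abs_coeff₀_le (hL : 0 ≤ L) : |coeff₀ L t| ≤ exp (-(t * L) / 2) * (2 * (1 + L)) := by
  rw [coeff₀, abs_mul, abs_exp]
  gcongr
  linarith [abs_add_le (cos (π * t / 4)) (2 * L / π * sin (π * t / 4)), abs_cos_le_one (π * t / 4),
    abs_mul_sin_le (by positivity : 0 ≤ 2 * L / π) (π * t / 4), two_mul_div_pi_le hL]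

lemma abs_coeff₁_le (hL : 0 ≤ L) : |coeff₁ L t| ≤ exp (-(t * L) / 2) * (2 * (1 + L)) := by
  have h4 : 4 / π ≤ 2 := by
    rw [div_le_iff₀ pi_pos]
    linarith [pi_gt_three]
  rw [coeff₁, abs_mul, abs_exp]
  gcongr
  linarith [abs_mul_sin_le (by positivity : 0 ≤ 4 / π) (π * t / 4)]

lemma abs_coeff₀'_le (hL : 0 ≤ L) : |coeff₀' L t| ≤ exp (-(t * L) / 2) * (1 + L) ^ 2 := by
  have hc : L ^ 2 / π + π / 4 ≤ (1 + L) ^ 2 := by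
    have : L ^ 2 / π ≤ L ^ 2 := div_le_self (sq_nonneg L) (by linarith [pi_gt_three])
    nlinarith [pi_le_four]
  rw [coeff₀', abs_mul, abs_exp, neg_mul, abs_neg]
  gcongr
  exact (abs_mul_sin_le (by positivity) _).trans hc

lemma abs_coeff₁'_le (hL : 0 ≤ L) : |coeff₁' L t| ≤ exp (-(t * L) / 2) * (1 + L) ^ 2 := by
  rw [coeff₁', abs_mul, abs_exp]
  gcongr
  nlinarith [abs_sub (cos (π * t / 4)) (2 * L / π * sin (π * t / 4)), abs_cos_le_one (π * t / 4),
    abs_mul_sin_le (by positivity : 0 ≤ 2 * L / π) (π * t / 4), two_mul_div_pi_le hL]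

end Coefficients

variable {N : ℕ} (w₀ w₁ : EuclideanSpace ℝ (Fin N) → ℂ)

lemma uhat_eq_coeff (ξ : EuclideanSpace ℝ (Fin N)) (t : ℝ) :
    uhat w₀ w₁ ξ t
      = coeff₀ (log (1 + ‖ξ‖ ^ 2)) t * w₀ ξ + coeff₁ (log (1 + ‖ξ‖ ^ 2)) t * w₁ ξ := by
  simp only [uhat, coeff₀, coeff₁]
  push_cast
  ring

lemma hasDerivAt_uhat (ξ : EuclideanSpace ℝ (Fin N)) (t : ℝ) :
    HasDerivAt (uhat w₀ w₁ ξ)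
      (coeff₀' (log (1 + ‖ξ‖ ^ 2)) t * w₀ ξ + coeff₁' (log (1 + ‖ξ‖ ^ 2)) t * w₁ ξ) t := by
  rw [show uhat w₀ w₁ ξ = _ from funext (uhat_eq_coeff w₀ w₁ ξ)]
  exact ((hasDerivAt_coeff₀ _ t).ofReal_comp.mul_const _).add
    ((hasDerivAt_coeff₁ _ t).ofReal_comp.mul_const _)

noncomputable def energyDensity (ξ : EuclideanSpace ℝ (Fin N)) (t : ℝ) : ℝ :=
  ‖deriv (fun s => uhat w₀ w₁ ξ s) t‖ ^ 2
    + (1 / 4) * log (1 + ‖ξ‖ ^ 2) ^ 2 * ‖uhat w₀ w₁ ξ t‖ ^ 2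
    + (π ^ 2 / 4) * ‖uhat w₀ w₁ ξ t‖ ^ 2

lemma energyDensity_le (ξ : EuclideanSpace ℝ (Fin N)) (t : ℝ) :
    energyDensity w₀ w₁ ξ t ≤ 26 * exp (-(t * log (1 + ‖ξ‖ ^ 2))) * (1 + log (1 + ‖ξ‖ ^ 2)) ^ 4
      * (‖w₀ ξ‖ ^ 2 + ‖w₁ ξ‖ ^ 2) := by
  rw [energyDensity, (hasDerivAt_uhat w₀ w₁ ξ t).deriv, uhat_eq_coeff]
  set L := log (1 + ‖ξ‖ ^ 2)
  have hL : 0 ≤ L := log_nonneg (by nlinarith [norm_nonneg ξ])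
  set e := exp (-(t * L) / 2)
  have he : exp (-(t * L)) = e ^ 2 := by rw [← exp_nat_mul]; ring_nf
  have hd := norm_ofReal_mul_add_ofReal_mul_sq_le (abs_coeff₀'_le t hL) (abs_coeff₁'_le t hL)
    (w₀ ξ) (w₁ ξ)
  have hu := norm_ofReal_mul_add_ofReal_mul_sq_le (abs_coeff₀_le t hL) (abs_coeff₁_le t hL)
    (w₀ ξ) (w₁ ξ)
  have hweight : (1 / 4) * L ^ 2 + π ^ 2 / 4 ≤ 3 * (1 + L) ^ 2 := by
    nlinarith [pi_lt_d2, pi_gt_three]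
  set d := (coeff₀' L t : ℂ) * w₀ ξ + coeff₁' L t * w₁ ξ
  set u := (coeff₀ L t : ℂ) * w₀ ξ + coeff₁ L t * w₁ ξ
  set S := ‖w₀ ξ‖ ^ 2 + ‖w₁ ξ‖ ^ 2
  calc ‖d‖ ^ 2 + 1 / 4 * L ^ 2 * ‖u‖ ^ 2 + π ^ 2 / 4 * ‖u‖ ^ 2
      = ‖d‖ ^ 2 + (1 / 4 * L ^ 2 + π ^ 2 / 4) * ‖u‖ ^ 2 := by ring
    _ ≤ 2 * (e * (1 + L) ^ 2) ^ 2 * S + 3 * (1 + L) ^ 2 * (2 * (e * (2 * (1 + L))) ^ 2 * S) := by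
      gcongr
    _ = 26 * exp (-(t * L)) * (1 + L) ^ 4 * S := by rw [he]; ring

lemma energyDensity_le_of_norm_le {ξ : EuclideanSpace ℝ (Fin N)} {M₀ M₁ t : ℝ} (ht : 12 ≤ t)
    (h₀ : ‖w₀ ξ‖ ≤ M₀) (h₁ : ‖w₁ ξ‖ ≤ M₁) :
    energyDensity w₀ w₁ ξ t ≤ 416 * (M₀ ^ 2 + M₁ ^ 2) * exp (-(t / 2) * ‖ξ‖ ^ 2)
      + 26 * (2 : ℝ) ^ (-(2 * t) / 3) * (‖w₀ ξ‖ ^ 2 + ‖w₁ ξ‖ ^ 2) := by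
  refine (energyDensity_le w₀ w₁ ξ t).trans ?_
  set L := log (1 + ‖ξ‖ ^ 2)
  have hL : 0 ≤ L := log_nonneg (by nlinarith [norm_nonneg ξ])
  have hS : ‖w₀ ξ‖ ^ 2 + ‖w₁ ξ‖ ^ 2 ≤ M₀ ^ 2 + M₁ ^ 2 := by gcongr
  rcases le_or_gt (‖ξ‖ ^ 2) 1 with hlow | hhigh
  · have hdecay := exp_neg_mul_mul_one_add_pow_four_le_gaussian (by linarith : 0 ≤ t) hL
      (half_le_log_one_add (sq_nonneg _) hlow)
      ((log_le_sub_one_of_pos (by positivity : (0 : ℝ) < 1 + ‖ξ‖ ^ 2)).trans (by linarith))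
    calc 26 * exp (-(t * L)) * (1 + L) ^ 4 * (‖w₀ ξ‖ ^ 2 + ‖w₁ ξ‖ ^ 2)
        = 26 * (exp (-(t * L)) * (1 + L) ^ 4) * (‖w₀ ξ‖ ^ 2 + ‖w₁ ξ‖ ^ 2) := by ring
      _ ≤ 26 * (16 * exp (-(t / 2) * ‖ξ‖ ^ 2)) * (M₀ ^ 2 + M₁ ^ 2) := by gcongr
      _ ≤ _ := le_add_of_le_of_nonneg (le_of_eq (by ring)) (by positivity)
  · have hdecay := exp_neg_mul_mul_one_add_pow_four_le_two_rpow ht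
      (log_le_log two_pos (by linarith : (2 : ℝ) ≤ 1 + ‖ξ‖ ^ 2))
    calc 26 * exp (-(t * L)) * (1 + L) ^ 4 * (‖w₀ ξ‖ ^ 2 + ‖w₁ ξ‖ ^ 2)
        = 26 * (exp (-(t * L)) * (1 + L) ^ 4) * (‖w₀ ξ‖ ^ 2 + ‖w₁ ξ‖ ^ 2) := by ring
      _ ≤ 26 * (2 : ℝ) ^ (-(2 * t) / 3) * (‖w₀ ξ‖ ^ 2 + ‖w₁ ξ‖ ^ 2) := by gcongr
      _ ≤ _ := le_add_of_nonneg_left (by positivity)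

lemma integral_energyDensity_le {M₀ M₁ t : ℝ} (ht : 12 ≤ t)
    (hw₀ : Integrable fun ξ => ‖w₀ ξ‖ ^ 2) (hw₁ : Integrable fun ξ => ‖w₁ ξ‖ ^ 2)
    (hM₀ : ∀ ξ, ‖w₀ ξ‖ ≤ M₀) (hM₁ : ∀ ξ, ‖w₁ ξ‖ ≤ M₁) :
    ∫ ξ, energyDensity w₀ w₁ ξ t
      ≤ 416 * (2 * π) ^ ((N : ℝ) / 2) * (M₀ ^ 2 + M₁ ^ 2) * t ^ (-(N : ℝ) / 2)
        + 26 * (2 : ℝ) ^ (-(2 * t) / 3) * ((∫ ξ, ‖w₀ ξ‖ ^ 2) + ∫ ξ, ‖w₁ ξ‖ ^ 2) := by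
  have ht0 : 0 < t := by linarith
  have hgauss : Integrable fun ξ : EuclideanSpace ℝ (Fin N) =>
      416 * (M₀ ^ 2 + M₁ ^ 2) * exp (-(t / 2) * ‖ξ‖ ^ 2) :=
    (integrable_exp_neg_mul_sq_norm (half_pos ht0)).const_mul _
  have hdata : Integrable fun ξ =>
      26 * (2 : ℝ) ^ (-(2 * t) / 3) * (‖w₀ ξ‖ ^ 2 + ‖w₁ ξ‖ ^ 2) :=
    (hw₀.add hw₁).const_mul _
  refine (integral_mono_of_nonneg (ae_of_all _ fun ξ => ?_) (hgauss.add hdata)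
    (ae_of_all _ fun ξ => energyDensity_le_of_norm_le w₀ w₁ ht (hM₀ ξ) (hM₁ ξ))).trans_eq ?_
  · unfold energyDensity
    positivity
  · rw [integral_add' hgauss hdata, integral_const_mul, integral_const_mul,
      integral_exp_neg_half_mul_sq_norm ht0, integral_add hw₀ hw₁]
    ring

end DampedWave

theorem stmt_10_general (N : ℕ)
    (u₀ u₁ : EuclideanSpace ℝ (Fin N) → ℂ)
    (hw₀ : Integrable (fun ξ : EuclideanSpace ℝ (Fin N) => ‖ft u₀ ξ‖ ^ 2))
    (hw₁ : Integrable (fun ξ : EuclideanSpace ℝ (Fin N) => ‖ft u₁ ξ‖ ^ 2)) :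
    ∃ C > (0 : ℝ), ∃ T > (0 : ℝ), ∀ t : ℝ, T ≤ t →
      (∫ ξ : EuclideanSpace ℝ (Fin N),
        (‖deriv (fun s => uhat (ft u₀) (ft u₁) ξ s) t‖ ^ 2
          + (1 / 4) * Real.log (1 + ‖ξ‖ ^ 2) ^ 2 * ‖uhat (ft u₀) (ft u₁) ξ t‖ ^ 2
          + (Real.pi ^ 2 / 4) * ‖uhat (ft u₀) (ft u₁) ξ t‖ ^ 2))
      ≤ C * ((∫ x, ‖u₁ x‖) ^ 2 * t ^ (-(N : ℝ) / 2)
              + (∫ x, ‖u₀ x‖) ^ 2 * t ^ (-((N : ℝ) + 4) / 2)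
              + Real.pi ^ 2 * (∫ x, ‖u₀ x‖) ^ 2 * t ^ (-(N : ℝ) / 2))
        + C * ((2 : ℝ) ^ (-(2 * t) / 3) * (∫ ξ : EuclideanSpace ℝ (Fin N), ‖ft u₁ ξ‖ ^ 2)
              + (2 : ℝ) ^ (-(2 * t) / 3) * (∫ ξ : EuclideanSpace ℝ (Fin N), ‖ft u₀ ξ‖ ^ 2))
        + C * Real.exp (-(8 * t) / 9)
            * (∫ ξ : EuclideanSpace ℝ (Fin N),
                (‖ft u₁ ξ‖ ^ 2
                  + (1 / 4) * (Real.log (1 + ‖ξ‖ ^ 2) ^ 2 + Real.pi ^ 2) * ‖ft u₀ ξ‖ ^ 2)) := by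
  refine ⟨416 * (2 * π) ^ ((N : ℝ) / 2) + 26, by positivity, 12, by norm_num, fun t ht => ?_⟩
  refine (DampedWave.integral_energyDensity_le (ft u₀) (ft u₁) ht hw₀ hw₁ (norm_ft_le u₀)
    (norm_ft_le u₁)).trans ?_
  set K := 416 * (2 * π) ^ ((N : ℝ) / 2)
  have hK : 0 ≤ K := by positivity
  have hKπ : K ≤ (K + 26) * π ^ 2 := (le_add_of_nonneg_right (by norm_num)).trans
    (le_mul_of_one_le_right (by positivity) (one_le_pow₀ (by linarith [pi_gt_three])))
  have hM₀ : 0 ≤ (∫ x, ‖u₀ x‖) ^ 2 * t ^ (-(N : ℝ) / 2) := by positivity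
  have hM₁ : 0 ≤ (∫ x, ‖u₁ x‖) ^ 2 * t ^ (-(N : ℝ) / 2) := by positivity
  have hQ : 0 ≤ (K + 26) * ((∫ x, ‖u₀ x‖) ^ 2 * t ^ (-((N : ℝ) + 4) / 2)) := by positivity
  have hI : 0 ≤ (2 : ℝ) ^ (-(2 * t) / 3) * ((∫ ξ, ‖ft u₀ ξ‖ ^ 2) + ∫ ξ, ‖ft u₁ ξ‖ ^ 2) :=
    mul_nonneg (by positivity) (add_nonneg (integral_nonneg fun _ => by positivity)
      (integral_nonneg fun _ => by positivity))
  have hE : 0 ≤ (K + 26) * exp (-(8 * t) / 9) * ∫ ξ : EuclideanSpace ℝ (Fin N),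
      (‖ft u₁ ξ‖ ^ 2 + (1 / 4) * (log (1 + ‖ξ‖ ^ 2) ^ 2 + π ^ 2) * ‖ft u₀ ξ‖ ^ 2) :=
    mul_nonneg (by positivity) (integral_nonneg fun _ => by positivity)
  linarith [mul_le_mul_of_nonneg_right (le_add_of_nonneg_right (by norm_num) : K ≤ K + 26) hM₁,
    mul_le_mul_of_nonneg_right hKπ hM₀,
    mul_le_mul_of_nonneg_right (le_add_of_nonneg_left hK : (26 : ℝ) ≤ K + 26) hI]

/-- Theorem 2.6: decay of the total energy (Fourier-side form, via Plancherel). -/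
theorem stmt_10 (N : ℕ) (hN : 3 ≤ N)
    (u₀ u₁ : EuclideanSpace ℝ (Fin N) → ℂ)
    (h₀ : Integrable u₀) (h₁ : Integrable u₁)
    (hw₀ : Integrable (fun ξ : EuclideanSpace ℝ (Fin N) => ‖ft u₀ ξ‖ ^ 2))
    (hw₁ : Integrable (fun ξ : EuclideanSpace ℝ (Fin N) => ‖ft u₁ ξ‖ ^ 2))
    (hE0 : Integrable (fun ξ : EuclideanSpace ℝ (Fin N) =>
      ‖ft u₁ ξ‖ ^ 2 + (1 / 4) * (Real.log (1 + ‖ξ‖ ^ 2) ^ 2 + Real.pi ^ 2) * ‖ft u₀ ξ‖ ^ 2)) :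
    ∃ C > (0 : ℝ), ∃ T > (0 : ℝ), ∀ t : ℝ, T ≤ t →
      (∫ ξ : EuclideanSpace ℝ (Fin N),
        (‖deriv (fun s => uhat (ft u₀) (ft u₁) ξ s) t‖ ^ 2
          + (1 / 4) * Real.log (1 + ‖ξ‖ ^ 2) ^ 2 * ‖uhat (ft u₀) (ft u₁) ξ t‖ ^ 2
          + (Real.pi ^ 2 / 4) * ‖uhat (ft u₀) (ft u₁) ξ t‖ ^ 2))
      ≤ C * ((∫ x, ‖u₁ x‖) ^ 2 * t ^ (-(N : ℝ) / 2)
              + (∫ x, ‖u₀ x‖) ^ 2 * t ^ (-((N : ℝ) + 4) / 2)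
              + Real.pi ^ 2 * (∫ x, ‖u₀ x‖) ^ 2 * t ^ (-(N : ℝ) / 2))
        + C * ((2 : ℝ) ^ (-(2 * t) / 3) * (∫ ξ : EuclideanSpace ℝ (Fin N), ‖ft u₁ ξ‖ ^ 2)
              + (2 : ℝ) ^ (-(2 * t) / 3) * (∫ ξ : EuclideanSpace ℝ (Fin N), ‖ft u₀ ξ‖ ^ 2))
        + C * Real.exp (-(8 * t) / 9)
            * (∫ ξ : EuclideanSpace ℝ (Fin N),
                (‖ft u₁ ξ‖ ^ 2
                  + (1 / 4) * (Real.log (1 + ‖ξ‖ ^ 2) ^ 2 + Real.pi ^ 2) * ‖ft u₀ ξ‖ ^ 2)) :=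
  stmt_10_general N u₀ u₁ hw₀ hw₁
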